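/- arXiv:1902.04304 — 3 statements merged into one kernel-verified Lean document; each statement's English description precedes it below -/
import Mathlib

section
/- Almost surely, E[e | x] = θ̃'(I_d − P_{M̃})(E[z̃ | x] − P_{M̃} z̃), where E[z̃ | x] denotes the componentwise conditional expectation of z̃ given the σ-algebra generated by x. -/
open MeasureTheory Matrix ProbabilityTheory

/-!
Everything is computed in the whitened coordinates z̃, which have mean 0, identity covariance and
are independent of ε. For working parameters (a, b) the residual is
`c(a, b) + (θ̃ − M̃b)'z̃ + ε` with a constant `c(a, b)`, so its second moment is
`c(a, b)² + |θ̃ − M̃b|² + E[ε²]`. At the minimizer this forces `c = 0` and `M̃'(θ̃ − M̃β) = 0`,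
i.e. `θ̃ − M̃β = (I − P)θ̃`. Hence `e = ((I − P)θ̃)'z̃ + ε`; as x is a function of z̃, ε is
independent of x and `E[e | x] = ((I − P)θ̃)'E[z̃ | x]`, while the term `P z̃` of the claim is
annihilated by `(I − P)P = 0`.
-/

namespace Matrix

variable {m n : Type*} [Fintype m] [Fintype n]

theorem isUnit_of_rank_eq_card [DecidableEq n] {K : Type*} [Field K] {B : Matrix n n K}
    (h : B.rank = Fintype.card n) : IsUnit B := by
  rw [← mulVec_surjective_iff_isUnit]
  have hrange : LinearMap.range B.mulVecLin = ⊤ :=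
    Submodule.eq_top_of_finrank_eq (by simpa [rank] using h)
  exact LinearMap.range_eq_top.mp hrange

theorem isUnit_transpose_mul_self [DecidableEq n] {A : Matrix m n ℝ}
    (hA : A.rank = Fintype.card n) : IsUnit (Aᵀ * A) :=
  isUnit_of_rank_eq_card (by rw [rank_transpose_mul_self, hA])

theorem transpose_mulVec_eq_zero_of_forall_le {A : Matrix m n ℝ} {w : m → ℝ}
    (h : ∀ b, w ⬝ᵥ w ≤ (w - A *ᵥ b) ⬝ᵥ (w - A *ᵥ b)) : Aᵀ *ᵥ w = 0 := by
  set g := Aᵀ *ᵥ w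
  -- Testing `b = t • g` gives a quadratic in `t` with discriminant `4 (g ⬝ᵥ g)²`.
  have hquad : ∀ t : ℝ, 0 ≤ ((A *ᵥ g) ⬝ᵥ (A *ᵥ g)) * (t * t) + (-2 * (g ⬝ᵥ g)) * t + 0 := by
    intro t
    have hgw : (A *ᵥ g) ⬝ᵥ w = g ⬝ᵥ g := by
      rw [dotProduct_comm, dotProduct_mulVec, ← mulVec_transpose, dotProduct_comm]
    have := h (t • g)
    simp only [mulVec_smul, dotProduct_sub, sub_dotProduct, dotProduct_smul, smul_dotProduct,
      dotProduct_comm w (A *ᵥ g), hgw, smul_eq_mul] at this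
    nlinarith
  have hdisc := discrim_le_zero hquad
  rw [discrim] at hdisc
  exact dotProduct_self_eq_zero.mp (by nlinarith)

section Projection

variable [DecidableEq n]

/-- The orthogonal projection onto the column space of `A` when `Aᵀ * A` is invertible
(otherwise Mathlib's `(Aᵀ * A)⁻¹ = 0` makes it `0`). -/
noncomputable def colProj (A : Matrix m n ℝ) : Matrix m m ℝ := A * (Aᵀ * A)⁻¹ * Aᵀ

theorem transpose_colProj (A : Matrix m n ℝ) : A.colProjᵀ = A.colProj := by
  rw [colProj, transpose_mul, transpose_mul, transpose_transpose, transpose_nonsing_inv,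
    transpose_mul, transpose_transpose, Matrix.mul_assoc]

variable {A : Matrix m n ℝ}

theorem colProj_mul (hA : IsUnit (Aᵀ * A)) : A.colProj * A = A := by
  rw [colProj, Matrix.mul_assoc, Matrix.mul_assoc,
    nonsing_inv_mul _ ((isUnit_iff_isUnit_det _).mp hA), Matrix.mul_one]

theorem colProj_mul_colProj (hA : IsUnit (Aᵀ * A)) : A.colProj * A.colProj = A.colProj := by
  nth_rw 2 [colProj]
  rw [← Matrix.mul_assoc, ← Matrix.mul_assoc, colProj_mul hA, colProj]

theorem colProj_mulVec_eq_zero {w : m → ℝ} (hw : Aᵀ *ᵥ w = 0) : A.colProj *ᵥ w = 0 := by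
  rw [colProj, ← mulVec_mulVec, hw, mulVec_zero]

variable [DecidableEq m]

theorem dotProduct_one_sub_colProj_mulVec (hA : IsUnit (Aᵀ * A)) {w : m → ℝ}
    (hw : Aᵀ *ᵥ w = 0) (b : n → ℝ) (u v : m → ℝ) :
    (w + A *ᵥ b) ⬝ᵥ ((1 - A.colProj) *ᵥ (u - A.colProj *ᵥ v)) = w ⬝ᵥ u := by
  have hkill : (1 - A.colProj) * A.colProj = 0 := by
    rw [Matrix.sub_mul, Matrix.one_mul, colProj_mul_colProj hA, sub_self]
  have hresid : (1 - A.colProj) *ᵥ (w + A *ᵥ b) = w := by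
    rw [sub_mulVec, one_mulVec, mulVec_add, colProj_mulVec_eq_zero hw, mulVec_mulVec,
      colProj_mul hA]
    abel
  rw [mulVec_sub, mulVec_mulVec, hkill, zero_mulVec, sub_zero, dotProduct_mulVec,
    ← mulVec_transpose, transpose_sub, transpose_one, transpose_colProj, hresid]

end Projection

end Matrix

structure IsIsotropic {Ω ι : Type*} {mΩ : MeasurableSpace Ω} [Fintype ι] [DecidableEq ι]
    (ζ : Ω → ι → ℝ) (μ : Measure Ω) : Prop where
  memLp : ∀ i, MemLp (fun ω => ζ ω i) 2 μ
  integral_eq_zero : ∀ i, ∫ ω, ζ ω i ∂μ = 0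
  integral_mul : ∀ i j, ∫ ω, ζ ω i * ζ ω j ∂μ = (1 : Matrix ι ι ℝ) i j

section Moments

variable {Ω ι : Type*} {mΩ : MeasurableSpace Ω} {μ : Measure Ω} [Fintype ι] {ζ : Ω → ι → ℝ}

theorem integral_dotProduct (hζ : ∀ i, Integrable (fun ω => ζ ω i) μ) (w : ι → ℝ) :
    ∫ ω, w ⬝ᵥ ζ ω ∂μ = w ⬝ᵥ fun i => ∫ ω, ζ ω i ∂μ := by
  simp only [dotProduct]
  rw [integral_finsetSum _ fun i _ => (hζ i).const_mul (w i)]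
  simp only [integral_const_mul]

theorem memLp_dotProduct {p : ENNReal} (hζ : ∀ i, MemLp (fun ω => ζ ω i) p μ) (w : ι → ℝ) :
    MemLp (fun ω => w ⬝ᵥ ζ ω) p μ :=
  memLp_finsetSum _ fun i _ => (hζ i).const_mul (w i)

theorem integral_dotProduct_sq [DecidableEq ι] (hζ : ∀ i, MemLp (fun ω => ζ ω i) 2 μ)
    (hcov : ∀ i j, ∫ ω, ζ ω i * ζ ω j ∂μ = (1 : Matrix ι ι ℝ) i j) (w : ι → ℝ) :
    ∫ ω, (w ⬝ᵥ ζ ω) ^ 2 ∂μ = w ⬝ᵥ w := by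
  have hprod : ∀ i j, Integrable (fun ω => ζ ω i * ζ ω j) μ := fun i j =>
    (hζ i).integrable_mul (hζ j)
  have hsq : ∀ ω, (w ⬝ᵥ ζ ω) ^ 2 = ∑ i, w i * ∑ j, w j * (ζ ω i * ζ ω j) := by
    intro ω
    rw [sq, dotProduct, Finset.sum_mul]
    refine Finset.sum_congr rfl fun i _ => ?_
    rw [Finset.mul_sum, Finset.mul_sum]
    exact Finset.sum_congr rfl fun j _ => by ring
  simp_rw [hsq]
  rw [integral_finsetSum _ fun i _ => (integrable_finsetSum _ fun j _ =>
    (hprod i j).const_mul (w j)).const_mul (w i)]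
  simp_rw [integral_const_mul, integral_finsetSum _ fun j _ => (hprod _ j).const_mul (w j),
    integral_const_mul, hcov, one_apply]
  simp [dotProduct]

theorem integral_add_sq_of_indepFun {u v : Ω → ℝ} (huv : IndepFun u v μ) (hu : MemLp u 2 μ)
    (hv : MemLp v 2 μ) (hv0 : ∫ ω, v ω ∂μ = 0) :
    ∫ ω, (u ω + v ω) ^ 2 ∂μ = ∫ ω, u ω ^ 2 ∂μ + ∫ ω, v ω ^ 2 ∂μ := by
  have hcross : ∫ ω, u ω * v ω ∂μ = 0 := by
    have := huv.integral_mul_eq_mul_integral hu.aestronglyMeasurable hv.aestronglyMeasurable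
    simpa [hv0] using this
  have hexp : ∀ ω, (u ω + v ω) ^ 2 = u ω ^ 2 + 2 * (u ω * v ω) + v ω ^ 2 := fun ω => by ring
  have hu2 : Integrable (fun ω => u ω ^ 2) μ := hu.integrable_sq
  have huv2 : Integrable (fun ω => 2 * (u ω * v ω)) μ := (hu.integrable_mul hv).const_mul 2
  simp_rw [hexp]
  rw [integral_add (hu2.fun_add huv2) hv.integrable_sq, integral_add hu2 huv2, integral_const_mul,
    hcross, mul_zero, add_zero]

variable [IsProbabilityMeasure μ] [DecidableEq ι] {ε : Ω → ℝ}

theorem IsIsotropic.integral_sq_const_add_dotProduct_add (hζ : IsIsotropic ζ μ)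
    (hε : MemLp ε 2 μ) (hε0 : ∫ ω, ε ω ∂μ = 0) (hind : IndepFun ζ ε μ) (c : ℝ) (w : ι → ℝ) :
    ∫ ω, (c + w ⬝ᵥ ζ ω + ε ω) ^ 2 ∂μ = c ^ 2 + w ⬝ᵥ w + ∫ ω, ε ω ^ 2 ∂μ := by
  have hwζ : MemLp (fun ω => w ⬝ᵥ ζ ω) 2 μ := memLp_dotProduct hζ.memLp w
  have hwζ0 : ∫ ω, w ⬝ᵥ ζ ω ∂μ = 0 := by
    simp [integral_dotProduct (fun i => (hζ.memLp i).integrable one_le_two),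
      hζ.integral_eq_zero]
  have hlin : ∫ ω, (c + w ⬝ᵥ ζ ω) ^ 2 ∂μ = c ^ 2 + w ⬝ᵥ w := by
    rw [integral_add_sq_of_indepFun (indepFun_const_left c _) (memLp_const c) hwζ hwζ0,
      integral_dotProduct_sq hζ.memLp hζ.integral_mul]
    simp
  have hindε : IndepFun (fun ω => c + w ⬝ᵥ ζ ω) ε μ :=
    hind.comp (φ := fun v => c + w ⬝ᵥ v) (by fun_prop) measurable_id
  rw [integral_add_sq_of_indepFun hindε ((memLp_const c).add hwζ) hε hε0, hlin]

theorem IsIsotropic.normal_equations (hζ : IsIsotropic ζ μ) (hε : MemLp ε 2 μ)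
    (hε0 : ∫ ω, ε ω ∂μ = 0) (hind : IndepFun ζ ε μ) {κ : Type*} [Fintype κ]
    (A : Matrix ι κ ℝ) (x₀ : κ → ℝ) (c₀ : ℝ) (u : ι → ℝ) {α : ℝ} {β : κ → ℝ}
    (hmin : ∀ a b, ∫ ω, ((c₀ - α - β ⬝ᵥ x₀) + (u - A *ᵥ β) ⬝ᵥ ζ ω + ε ω) ^ 2 ∂μ ≤
      ∫ ω, ((c₀ - a - b ⬝ᵥ x₀) + (u - A *ᵥ b) ⬝ᵥ ζ ω + ε ω) ^ 2 ∂μ) :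
    c₀ - α - β ⬝ᵥ x₀ = 0 ∧ Aᵀ *ᵥ (u - A *ᵥ β) = 0 := by
  simp only [hζ.integral_sq_const_add_dotProduct_add hε hε0 hind] at hmin
  constructor
  · have h := hmin (c₀ - β ⬝ᵥ x₀) β
    rw [sub_sub_cancel, sub_self] at h
    exact pow_eq_zero_iff two_ne_zero |>.mp (by nlinarith [sq_nonneg (c₀ - α - β ⬝ᵥ x₀)])
  · refine transpose_mulVec_eq_zero_of_forall_le fun b => ?_
    have h := hmin (c₀ - (β + b) ⬝ᵥ x₀) (β + b)
    rw [sub_sub_cancel, sub_self, mulVec_add, ← sub_sub] at h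
    nlinarith [sq_nonneg (c₀ - α - β ⬝ᵥ x₀)]

end Moments

section CondExp

variable {Ω ι : Type*} {mΩ : MeasurableSpace Ω} {μ : Measure Ω} [Fintype ι] {ζ : Ω → ι → ℝ}
  {m : MeasurableSpace Ω}

theorem condExp_dotProduct (hζ : ∀ i, Integrable (fun ω => ζ ω i) μ) (w : ι → ℝ) :
    μ[fun ω => w ⬝ᵥ ζ ω | m] =ᵐ[μ] fun ω => w ⬝ᵥ fun i => μ[fun ω => ζ ω i | m] ω := by
  have hsum : (fun ω => w ⬝ᵥ ζ ω) = ∑ i, w i • fun ω => ζ ω i := by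
    ext ω; simp [dotProduct]
  rw [hsum]
  filter_upwards [condExp_finsetSum (s := Finset.univ) (fun i _ => (hζ i).smul (w i)) m,
    ae_all_iff.2 fun i => condExp_smul (μ := μ) (w i) (fun ω => ζ ω i) m] with ω hsum hsmul
  simp only [hsum, Finset.sum_apply, hsmul, Pi.smul_apply, smul_eq_mul, dotProduct]

theorem condExp_dotProduct_add_of_indep [IsFiniteMeasure μ] (hm : m ≤ mΩ)
    (hζ : ∀ i, Integrable (fun ω => ζ ω i) μ) {ε : Ω → ℝ} (hεm : Measurable[mΩ] ε)
    (hε : Integrable ε μ) (hε0 : ∫ ω, ε ω ∂μ = 0)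
    (hind : Indep (MeasurableSpace.comap ε inferInstance) m μ) (w : ι → ℝ) :
    μ[fun ω => w ⬝ᵥ ζ ω + ε ω | m] =ᵐ[μ] fun ω => w ⬝ᵥ fun i => μ[fun ω => ζ ω i | m] ω := by
  have hεm' : μ[ε | m] =ᵐ[μ] fun _ => ∫ ω, ε ω ∂μ :=
    condExp_indep_eq hεm.comap_le hm (Measurable.of_comap_le le_rfl).stronglyMeasurable hind
  have hint : Integrable (fun ω => w ⬝ᵥ ζ ω) μ :=
    integrable_finsetSum _ fun i _ => (hζ i).const_mul (w i)
  change μ[(fun ω => w ⬝ᵥ ζ ω) + ε | m] =ᵐ[μ] _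
  filter_upwards [condExp_add hint hε m, condExp_dotProduct (m := m) hζ w, hεm']
    with ω hadd hdot hε'
  rw [hadd, Pi.add_apply, hdot, hε', hε0, add_zero]

end CondExp

theorem stmt_5_general
    {Ω : Type*} [MeasureSpace Ω] [IsProbabilityMeasure (ℙ : Measure Ω)]
    {d p : ℕ}
    (z : Ω → Fin d → ℝ)
    (μv : Fin d → ℝ)
    (ε : Ω → ℝ) (hεm : Measurable ε) (hε2 : MemLp ε 2 ℙ)
    (hεmean : ∫ ω, ε ω = 0)
    (hindep : IndepFun z ε)
    (ϑ : ℝ) (θ : Fin d → ℝ)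
    (y : Ω → ℝ) (hy : ∀ ω, y ω = ϑ + θ ⬝ᵥ z ω + ε ω)
    (M : Matrix (Fin d) (Fin p) ℝ) (hM : M.rank = p)
    (x : Ω → Fin p → ℝ) (hx : ∀ ω, x ω = Mᵀ *ᵥ z ω)
    -- the surrogate parameters (α, β): the minimizers of E[(y − a − b'x)²]
    (α : ℝ) (β : Fin p → ℝ)
    (hmin : ∀ (a : ℝ) (b : Fin p → ℝ),
        ∫ ω, (y ω - α - β ⬝ᵥ x ω) ^ 2 ≤ ∫ ω, (y ω - a - b ⬝ᵥ x ω) ^ 2)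
    (e : Ω → ℝ) (he : ∀ ω, e ω = y ω - α - β ⬝ᵥ x ω)
    -- the representation z = μ + Σ^{1/2} R z̃ with Σ^{1/2} the symmetric positive
    -- definite square root of Σ, R orthogonal, E[z̃] = 0 and E[z̃ z̃'] = I_d
    (S : Matrix (Fin d) (Fin d) ℝ) (hSpd : S.PosDef)
    (R : Matrix (Fin d) (Fin d) ℝ) (hR : Rᵀ * R = 1)
    (zt : Ω → Fin d → ℝ) (hztm : Measurable zt)
    (hzt2 : ∀ i, MemLp (fun ω => zt ω i) 2 ℙ)
    (hztmean : ∀ i, ∫ ω, zt ω i = 0)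
    (hztcov : ∀ i j, ∫ ω, zt ω i * zt ω j = (1 : Matrix (Fin d) (Fin d) ℝ) i j)
    (hzrep : ∀ ω, z ω = μv + S *ᵥ (R *ᵥ zt ω))
    -- θ̃ = R'Σ^{1/2}θ, M̃ = R'Σ^{1/2}M and the projection P = M̃(M̃'M̃)⁻¹M̃'
    (θt : Fin d → ℝ) (hθt : θt = Rᵀ *ᵥ (S *ᵥ θ))
    (Mt : Matrix (Fin d) (Fin p) ℝ) (hMt : Mt = Rᵀ * S * M)
    (P : Matrix (Fin d) (Fin d) ℝ) (hP : P = Mt * (Mtᵀ * Mt)⁻¹ * Mtᵀ)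
    -- the σ-algebra generated by x
    (mx : MeasurableSpace Ω) (hmx : mx = MeasurableSpace.comap x inferInstance)
    :
    ∀ᵐ ω ∂ℙ, (ℙ[e|mx]) ω =
      θt ⬝ᵥ ((1 - P) *ᵥ (fun i => (ℙ[fun ω' => zt ω' i|mx]) ω - (P *ᵥ zt ω) i)) := by
  have hS : Sᵀ = S := isHermitian_iff_isSymm.mp hSpd.isHermitian
  have hSdet : IsUnit S.det := hSpd.det_pos.ne'.isUnit
  have hRdet : IsUnit R.det := isUnit_det_of_left_inverse hR
  have hzt : zt = (fun v => (S * R)⁻¹ *ᵥ (v - μv)) ∘ z := by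
    ext1 ω
    rw [Function.comp_apply, hzrep, add_sub_cancel_left, mulVec_mulVec, mulVec_mulVec,
      Matrix.mul_assoc, nonsing_inv_mul _ (by rw [det_mul]; exact hSdet.mul hRdet), one_mulVec]
  have hind : IndepFun zt ε := hzt ▸ hindep.comp (by fun_prop) measurable_id
  have hxzt : x = (fun v => Mᵀ *ᵥ μv + Mtᵀ *ᵥ v) ∘ zt := by
    ext1 ω
    simp only [Function.comp_apply, hx, hzrep, mulVec_add, hMt, transpose_mul, hS,
      transpose_transpose, mulVec_mulVec, Matrix.mul_assoc]
  have hθt' : θt = (θ ᵥ* S) ᵥ* R := by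
    rw [hθt, mulVec_transpose, ← vecMul_transpose, hS]
  have hres : ∀ a b ω, y ω - a - b ⬝ᵥ x ω =
      (ϑ + θ ⬝ᵥ μv - a - b ⬝ᵥ (Mᵀ *ᵥ μv)) + (θt - Mt *ᵥ b) ⬝ᵥ zt ω + ε ω := by
    intro a b ω
    simp only [hy, hxzt, hzrep, Function.comp_apply, dotProduct_add, sub_dotProduct, hθt',
      dotProduct_mulVec, vecMul_transpose]
    ring
  simp_rw [hres] at hmin
  obtain ⟨hc, hw⟩ := IsIsotropic.normal_equations ⟨hzt2, hztmean, hztcov⟩ hε2 hεmean hind Mt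
    (Mᵀ *ᵥ μv) (ϑ + θ ⬝ᵥ μv) θt hmin
  have he' : e = fun ω => (θt - Mt *ᵥ β) ⬝ᵥ zt ω + ε ω := by
    ext1 ω
    rw [he, hres, hc, zero_add]
  have hle : mx ≤ MeasureSpace.toMeasurableSpace := by
    rw [hmx, hxzt]
    exact ((by fun_prop : Measurable fun v => Mᵀ *ᵥ μv + Mtᵀ *ᵥ v).comp hztm).comap_le
  have hGram : IsUnit (Mtᵀ * Mt) := isUnit_transpose_mul_self <| by
    rw [hMt, rank_mul_eq_right_of_isUnit_det _ _
      (by rw [det_mul, det_transpose]; exact hRdet.mul hSdet), hM, Fintype.card_fin]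
  obtain rfl : P = Mt.colProj := hP
  filter_upwards [condExp_dotProduct_add_of_indep hle (fun i => (hzt2 i).integrable one_le_two)
    hεm (hε2.integrable one_le_two) hεmean
    (by rw [hmx, hxzt]; exact (hind.comp (by fun_prop) measurable_id).symm) (θt - Mt *ᵥ β)]
    with ω hω
  rw [he', hω]
  have := dotProduct_one_sub_colProj_mulVec hGram hw β
    (fun i => (ℙ[fun ω' => zt ω' i|mx]) ω) (zt ω)
  rw [sub_add_cancel] at this
  exact this.symm

/-- Almost surely,
`E[e | x] = θ̃'(I_d − P_{M̃})(E[z̃ | x] − P_{M̃} z̃)`, where `E[z̃ | x]` is the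
componentwise conditional expectation of `z̃` given the σ-algebra generated by `x`. -/
theorem stmt_5
    {Ω : Type*} [MeasureSpace Ω] [IsProbabilityMeasure (ℙ : Measure Ω)]
    {d p : ℕ} (hpd : p < d)
    (z : Ω → Fin d → ℝ) (hzm : Measurable z)
    (hz2 : ∀ i, MemLp (fun ω => z ω i) 2 ℙ)
    (μv : Fin d → ℝ) (hμ : ∀ i, ∫ ω, z ω i = μv i)
    (Sg : Matrix (Fin d) (Fin d) ℝ) (hSgpd : Sg.PosDef)
    (hSg : ∀ i j, ∫ ω, (z ω i - μv i) * (z ω j - μv j) = Sg i j)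
    (ε : Ω → ℝ) (hεm : Measurable ε) (hε2 : MemLp ε 2 ℙ)
    (hεmean : ∫ ω, ε ω = 0)
    (σ2 : ℝ) (hσ2 : 0 < σ2) (hεvar : ∫ ω, (ε ω) ^ 2 = σ2)
    (hindep : IndepFun z ε)
    (ϑ : ℝ) (θ : Fin d → ℝ)
    (y : Ω → ℝ) (hy : ∀ ω, y ω = ϑ + θ ⬝ᵥ z ω + ε ω)
    (M : Matrix (Fin d) (Fin p) ℝ) (hM : M.rank = p)
    (x : Ω → Fin p → ℝ) (hx : ∀ ω, x ω = Mᵀ *ᵥ z ω)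
    -- the surrogate parameters (α, β): the minimizers of E[(y − a − b'x)²]
    (α : ℝ) (β : Fin p → ℝ)
    (hmin : ∀ (a : ℝ) (b : Fin p → ℝ),
        ∫ ω, (y ω - α - β ⬝ᵥ x ω) ^ 2 ≤ ∫ ω, (y ω - a - b ⬝ᵥ x ω) ^ 2)
    (e : Ω → ℝ) (he : ∀ ω, e ω = y ω - α - β ⬝ᵥ x ω)
    (s2 : ℝ) (hs2 : s2 = ∫ ω, (e ω) ^ 2)
    -- the representation z = μ + Σ^{1/2} R z̃ with Σ^{1/2} the symmetric positive
    -- definite square root of Σ, R orthogonal, E[z̃] = 0 and E[z̃ z̃'] = I_d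
    (S : Matrix (Fin d) (Fin d) ℝ) (hSpd : S.PosDef) (hSsq : S * S = Sg)
    (R : Matrix (Fin d) (Fin d) ℝ) (hR : Rᵀ * R = 1)
    (zt : Ω → Fin d → ℝ) (hztm : Measurable zt)
    (hzt2 : ∀ i, MemLp (fun ω => zt ω i) 2 ℙ)
    (hztmean : ∀ i, ∫ ω, zt ω i = 0)
    (hztcov : ∀ i j, ∫ ω, zt ω i * zt ω j = (1 : Matrix (Fin d) (Fin d) ℝ) i j)
    (hzrep : ∀ ω, z ω = μv + S *ᵥ (R *ᵥ zt ω))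
    -- θ̃ = R'Σ^{1/2}θ, M̃ = R'Σ^{1/2}M and the projection P = M̃(M̃'M̃)⁻¹M̃'
    (θt : Fin d → ℝ) (hθt : θt = Rᵀ *ᵥ (S *ᵥ θ))
    (Mt : Matrix (Fin d) (Fin p) ℝ) (hMt : Mt = Rᵀ * S * M)
    (P : Matrix (Fin d) (Fin d) ℝ) (hP : P = Mt * (Mtᵀ * Mt)⁻¹ * Mtᵀ)
    -- the σ-algebra generated by x
    (mx : MeasurableSpace Ω) (hmx : mx = MeasurableSpace.comap x inferInstance)
    :
    ∀ᵐ ω ∂ℙ, (ℙ[e|mx]) ω =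
      θt ⬝ᵥ ((1 - P) *ᵥ (fun i => (ℙ[fun ω' => zt ω' i|mx]) ω - (P *ᵥ zt ω) i)) :=
  stmt_5_general z μv ε hεm hε2 hεmean hindep ϑ θ y hy M hM x hx α β hmin e he S hSpd R hR zt hztm
    hzt2 hztmean hztcov hzrep θt hθt Mt hMt P hP mx hmx
end

section
/- (Lemma 1.) For each n ∈ ℕ, let (x₁, e₁), …, (x_n, e_n) be i.i.d. copies (defined on a common probability space, with distributions possibly depending on n) of a pair (x, e), where e is real-valued with s² = E[e²] ∈ (0,∞) and Var[e | x] > 0 almost surely. Define e_i* = s·(Var[e_i | x_i])^{−1/2}(e_i − E[e_i | x_i]), E = (e₁,…,e_n)' and E* = (e₁*,…,e_n*)'. Assume there exist nonnegative sequences (c_n) and (r_n) with n^m·c_n → 0 as n → ∞ for every m ∈ ℕ and n·r_n → 0 as n → ∞, such that for every n and every t > 0: P(|E[e₁|x₁]|/s > t) ≤ c_n/t + r_n and P(|E[e₁²|x₁] − s²|/s² > t) ≤ c_n/t + r_n. Then, as n → ∞: (i) for every k ∈ ℝ, n^k·‖E − E*‖/s → 0 in probability; (ii) for every k ∈ ℝ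 and every sequence P_n of (possibly random) symmetric idempotent n×n matrices, n^k·|E'P_nE − (E*)'P_nE*|/s² → 0 in probability; and (iii) max_{1≤i≤n} |Var[e_i|x_i]/s² − 1| → 0 in probability. -/
/-!
Call a draw `i` good at level `t` when `|E[eᵢ|xᵢ]| ≤ t s`, `|E[eᵢ²|xᵢ] − s²| ≤ t s²` and
`|eᵢ| ≤ n s`. For a good draw the conditional variance is within `2 t s²` of `s²`, so its square
root is within `2 t s` of `s`, and then `eᵢ − eᵢ* = ((√Var − s) eᵢ + s E[eᵢ|xᵢ]) / √Var` is at most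
`6 n t s`. Hence when all `n` draws are good, `‖E − E*‖`, `|E'PE − E*'PE*|` (a projection is a
contraction) and `max |Var/s² − 1|` are bounded by polynomials in `n` times `t`, and taking
`t = n^(−M)` with `M` large makes them `O(1/n)`. By the tail hypotheses, Chebyshev's inequality
`P(|eᵢ| > n s) ≤ 1/n²` and a union bound, some draw is bad with probability at most
`2 n^(M+1) cₙ + 2 n rₙ + 1/n → 0`.
-/

open MeasureTheory Matrix ProbabilityTheory Filter Topology

theorem sqrt_sum_sq_le_of_abs_le {ι : Type*} [Fintype ι] {f : ι → ℝ} {C : ℝ}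
    (h : ∀ i, |f i| ≤ C) : √(∑ i, f i ^ 2) ≤ √(Fintype.card ι) * C := by
  cases isEmpty_or_nonempty ι
  · simp
  have hC : 0 ≤ C := (abs_nonneg _).trans (h (Classical.arbitrary ι))
  have hsum : ∑ i, f i ^ 2 ≤ Fintype.card ι * C ^ 2 :=
    calc ∑ i, f i ^ 2 ≤ ∑ _i : ι, C ^ 2 := Finset.sum_le_sum fun i _ =>
          (sq_abs (f i)).symm.trans_le (pow_le_pow_left₀ (abs_nonneg _) (h i) 2)
      _ = Fintype.card ι * C ^ 2 := by simp
  calc √(∑ i, f i ^ 2) ≤ √(Fintype.card ι * C ^ 2) := Real.sqrt_le_sqrt hsum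
    _ = √(Fintype.card ι) * C := by rw [Real.sqrt_mul (Nat.cast_nonneg _), Real.sqrt_sq hC]

theorem inv_pow_le_inv_of_le {a x : ℝ} (ha : 0 < a) (hax : a ≤ x) (hx : 1 ≤ x) {M : ℕ}
    (hM : M ≠ 0) : (x ^ M)⁻¹ ≤ a⁻¹ :=
  inv_anti₀ ha (hax.trans (le_self_pow₀ hx hM))

theorem rpow_le_pow_natCeil {x : ℝ} (hx : 1 ≤ x) (k : ℝ) : x ^ k ≤ x ^ ⌈k⌉₊ := by
  rw [← Real.rpow_natCast]
  exact Real.rpow_le_rpow_of_exponent_le hx (Nat.le_ceil k)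

namespace Matrix

variable {ι : Type*} [Fintype ι]

theorem abs_dotProduct_le_sqrt_mul_sqrt (u v : ι → ℝ) :
    |u ⬝ᵥ v| ≤ √(∑ i, u i ^ 2) * √(∑ i, v i ^ 2) := by
  rw [← Real.sqrt_mul (by positivity), ← Real.sqrt_sq_eq_abs]
  exact Real.sqrt_le_sqrt (Finset.sum_mul_sq_le_sq_mul_sq _ u v)

variable {P : Matrix ι ι ℝ}

theorem sqrt_sum_sq_mulVec_le (hsym : Pᵀ = P) (hid : P * P = P) (v : ι → ℝ) :
    √(∑ i, (P *ᵥ v) i ^ 2) ≤ √(∑ i, v i ^ 2) := by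
  have hsq : ∑ i, (P *ᵥ v) i ^ 2 = v ⬝ᵥ (P *ᵥ v) :=
    calc ∑ i, (P *ᵥ v) i ^ 2 = (P *ᵥ v) ⬝ᵥ (P *ᵥ v) := by simp only [dotProduct, sq]
      _ = v ⬝ᵥ (Pᵀ *ᵥ (P *ᵥ v)) := by rw [dotProduct_mulVec v Pᵀ, vecMul_transpose]
      _ = v ⬝ᵥ (P *ᵥ v) := by rw [mulVec_mulVec, hsym, hid]
  have hle : √(∑ i, (P *ᵥ v) i ^ 2) ^ 2 ≤ √(∑ i, v i ^ 2) * √(∑ i, (P *ᵥ v) i ^ 2) := by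
    calc _ = v ⬝ᵥ (P *ᵥ v) := by rw [Real.sq_sqrt (by positivity), hsq]
      _ ≤ _ := (le_abs_self _).trans (abs_dotProduct_le_sqrt_mul_sqrt _ _)
  nlinarith [Real.sqrt_nonneg (∑ i, (P *ᵥ v) i ^ 2), Real.sqrt_nonneg (∑ i, v i ^ 2)]

theorem abs_dotProduct_mulVec_sub_le (hsym : Pᵀ = P) (hid : P * P = P) (a b : ι → ℝ) :
    |a ⬝ᵥ (P *ᵥ a) - b ⬝ᵥ (P *ᵥ b)| ≤
      √(∑ i, (a i - b i) ^ 2) * (√(∑ i, a i ^ 2) + √(∑ i, b i ^ 2)) := by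
  have hsplit : a ⬝ᵥ (P *ᵥ a) - b ⬝ᵥ (P *ᵥ b) = (a - b) ⬝ᵥ (P *ᵥ a) + b ⬝ᵥ (P *ᵥ (a - b)) := by
    rw [sub_dotProduct, mulVec_sub, dotProduct_sub]
    ring
  have h1 : |(a - b) ⬝ᵥ (P *ᵥ a)| ≤ √(∑ i, (a i - b i) ^ 2) * √(∑ i, a i ^ 2) :=
    (abs_dotProduct_le_sqrt_mul_sqrt _ _).trans <|
      mul_le_mul_of_nonneg_left (sqrt_sum_sq_mulVec_le hsym hid a) (Real.sqrt_nonneg _)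
  have h2 : |b ⬝ᵥ (P *ᵥ (a - b))| ≤ √(∑ i, b i ^ 2) * √(∑ i, (a i - b i) ^ 2) :=
    (abs_dotProduct_le_sqrt_mul_sqrt _ _).trans <|
      mul_le_mul_of_nonneg_left (sqrt_sum_sq_mulVec_le hsym hid _) (Real.sqrt_nonneg _)
  rw [hsplit]
  linarith [abs_add_le ((a - b) ⬝ᵥ (P *ᵥ a)) (b ⬝ᵥ (P *ᵥ (a - b)))]

theorem abs_dotProduct_mulVec_sub_le_card_mul (hsym : Pᵀ = P) (hid : P * P = P)
    {a b : ι → ℝ} {A B D : ℝ} (ha : ∀ i, |a i| ≤ A) (hb : ∀ i, |b i| ≤ B)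
    (hab : ∀ i, |a i - b i| ≤ D) :
    |a ⬝ᵥ (P *ᵥ a) - b ⬝ᵥ (P *ᵥ b)| ≤ Fintype.card ι * D * (A + B) := by
  have hD := sqrt_sum_sq_le_of_abs_le hab
  calc |a ⬝ᵥ (P *ᵥ a) - b ⬝ᵥ (P *ᵥ b)|
      ≤ √(Fintype.card ι) * D * (√(Fintype.card ι) * A + √(Fintype.card ι) * B) :=
        (abs_dotProduct_mulVec_sub_le hsym hid a b).trans <|
          mul_le_mul hD (add_le_add (sqrt_sum_sq_le_of_abs_le ha) (sqrt_sum_sq_le_of_abs_le hb))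
            (by positivity) ((Real.sqrt_nonneg _).trans hD)
    _ = √(Fintype.card ι) * √(Fintype.card ι) * D * (A + B) := by ring
    _ = Fintype.card ι * D * (A + B) := by rw [Real.mul_self_sqrt (Nat.cast_nonneg _)]

end Matrix

def IsGoodDraw (s2 t N m1 m2 e : ℝ) : Prop :=
  |m1| / √s2 ≤ t ∧ |m2 - s2| / s2 ≤ t ∧ |e| ≤ N * √s2

theorem abs_sqrt_sub_sqrt_le {v s2 ε : ℝ} (hv : 0 ≤ v) (hs2 : 0 < s2)
    (h : |v - s2| ≤ ε * s2) : |√v - √s2| ≤ ε * √s2 := by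
  have hs : 0 < √s2 := Real.sqrt_pos.mpr hs2
  have hprod : |√v - √s2| * (√v + √s2) = |v - s2| := by
    rw [← abs_of_nonneg (by positivity : 0 ≤ √v + √s2), ← abs_mul]
    congr 1
    linear_combination Real.sq_sqrt hv - Real.sq_sqrt hs2.le
  refine le_of_mul_le_mul_right ?_ hs
  calc |√v - √s2| * √s2 ≤ |√v - √s2| * (√v + √s2) := by
        gcongr; exact le_add_of_nonneg_left (Real.sqrt_nonneg v)
    _ ≤ ε * s2 := hprod ▸ h
    _ = ε * √s2 * √s2 := by rw [mul_assoc, Real.mul_self_sqrt hs2.le]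

namespace IsGoodDraw

variable {s2 t N m1 m2 e : ℝ}

theorem abs_condVar_sub_le (h : IsGoodDraw s2 t N m1 m2 e) (hs2 : 0 < s2) (ht : t ≤ 1) :
    |m2 - m1 ^ 2 - s2| ≤ 2 * t * s2 := by
  have hs : 0 < √s2 := Real.sqrt_pos.mpr hs2
  have h1 : |m1| ≤ t * √s2 := (div_le_iff₀ hs).mp h.1
  have h2 : |m2 - s2| ≤ t * s2 := (div_le_iff₀ hs2).mp h.2.1
  have ht0 : 0 ≤ t := (div_nonneg (abs_nonneg _) hs.le).trans h.1
  have hm1 : m1 ^ 2 ≤ t * s2 :=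
    calc m1 ^ 2 = |m1| ^ 2 := (sq_abs m1).symm
      _ ≤ (t * √s2) ^ 2 := by gcongr
      _ = t ^ 2 * s2 := by rw [mul_pow, Real.sq_sqrt hs2.le]
      _ ≤ t * s2 := by gcongr; nlinarith
  calc |m2 - m1 ^ 2 - s2| ≤ |m2 - s2| + |m1 ^ 2| := by
        rw [show m2 - m1 ^ 2 - s2 = (m2 - s2) - m1 ^ 2 by ring]; exact abs_sub _ _
    _ ≤ 2 * t * s2 := by rw [abs_of_nonneg (sq_nonneg m1)]; linarith

theorem abs_condVar_div_sub_one_le (h : IsGoodDraw s2 t N m1 m2 e) (hs2 : 0 < s2) (ht : t ≤ 1) :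
    |(m2 - m1 ^ 2) / s2 - 1| ≤ 2 * t := by
  rw [div_sub_one hs2.ne', abs_div, abs_of_pos hs2, div_le_iff₀ hs2]
  exact h.abs_condVar_sub_le hs2 ht

theorem abs_sub_standardize_le (h : IsGoodDraw s2 t N m1 m2 e) (hs2 : 0 < s2) (ht : t ≤ 1 / 4)
    (hN : 1 ≤ N) : |e - √s2 * (√(m2 - m1 ^ 2))⁻¹ * (e - m1)| ≤ 6 * N * t * √s2 := by
  set s := √s2
  set w := √(m2 - m1 ^ 2)
  have hs : 0 < s := Real.sqrt_pos.mpr hs2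
  have ht0 : 0 ≤ t := (div_nonneg (abs_nonneg _) hs.le).trans h.1
  have hV := h.abs_condVar_sub_le hs2 (by linarith)
  have hV0 : 0 ≤ m2 - m1 ^ 2 := by
    linarith [(abs_le.mp hV).1, mul_le_mul_of_nonneg_right ht hs2.le]
  have hw : |w - s| ≤ 2 * t * s := abs_sqrt_sub_sqrt_le hV0 hs2 hV
  have hws : s / 2 ≤ w := by linarith [(abs_le.mp hw).1, mul_le_mul_of_nonneg_right ht hs.le]
  have hw0 : 0 < w := by linarith
  have h1 : |m1| ≤ t * s := (div_le_iff₀ hs).mp h.1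
  rw [show e - s * w⁻¹ * (e - m1) = ((w - s) * e + s * m1) / w by field_simp; ring,
    abs_div, abs_of_pos hw0, div_le_iff₀ hw0]
  calc |(w - s) * e + s * m1| ≤ |w - s| * |e| + s * |m1| :=
        (abs_add_le _ _).trans_eq (by rw [abs_mul, abs_mul, abs_of_pos hs])
    _ ≤ 2 * t * s * (N * s) + s * (t * s) := by gcongr; exact h.2.2
    _ ≤ 6 * N * t * s * (s / 2) := by nlinarith [mul_nonneg ht0 (mul_self_nonneg s)]
    _ ≤ 6 * N * t * s * w := by gcongr

end IsGoodDraw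

section Probability

variable {Ω : Type*} [MeasurableSpace Ω] {μ : Measure Ω} [IsFiniteMeasure μ]

theorem measureReal_le_abs_le_integral_sq_div {X : Ω → ℝ} (hX : MemLp X 2 μ) {ε : ℝ}
    (hε : 0 < ε) : μ.real {ω | ε ≤ |X ω|} ≤ (∫ ω, X ω ^ 2 ∂μ) / ε ^ 2 := by
  have hsub : {ω | ε ≤ |X ω|} ⊆ {ω | ε ^ 2 ≤ X ω ^ 2} := fun ω (hω : ε ≤ |X ω|) =>
    show ε ^ 2 ≤ X ω ^ 2 from sq_abs (X ω) ▸ pow_le_pow_left₀ hε.le hω 2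
  rw [le_div_iff₀ (by positivity), mul_comm]
  exact (mul_le_mul_of_nonneg_left (measureReal_mono hsub) (by positivity)).trans
    (mul_meas_ge_le_integral_of_nonneg (ae_of_all _ fun ω => sq_nonneg (X ω)) hX.integrable_sq _)

theorem measureReal_compl_forall_isGoodDraw_le {ι : Type*} [Fintype ι] {m1 m2 e : ι → Ω → ℝ}
    {s2 t N c r : ℝ} (hs2 : 0 < s2) (hN : 0 < N) (he2 : ∀ i, MemLp (e i) 2 μ)
    (hs2e : ∀ i, s2 = ∫ ω, e i ω ^ 2 ∂μ)
    (htail1 : ∀ i, μ.real {ω | t < |m1 i ω| / √s2} ≤ c / t + r)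
    (htail2 : ∀ i, μ.real {ω | t < |m2 i ω - s2| / s2} ≤ c / t + r) :
    μ.real {ω | ∀ i, IsGoodDraw s2 t N (m1 i ω) (m2 i ω) (e i ω)}ᶜ ≤
      Fintype.card ι * (2 * (c / t + r) + 1 / N ^ 2) := by
  have hcheb : ∀ i, μ.real {ω | N * √s2 ≤ |e i ω|} ≤ 1 / N ^ 2 := fun i => by
    refine (measureReal_le_abs_le_integral_sq_div (he2 i) (by positivity)).trans_eq ?_
    rw [← hs2e i, mul_pow, Real.sq_sqrt hs2.le]
    field_simp
  have hsub : {ω | ∀ i, IsGoodDraw s2 t N (m1 i ω) (m2 i ω) (e i ω)}ᶜ ⊆ ⋃ i,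
      ({ω | t < |m1 i ω| / √s2} ∪ {ω | t < |m2 i ω - s2| / s2} ∪ {ω | N * √s2 ≤ |e i ω|}) := by
    intro ω hω
    obtain ⟨i, hi⟩ := not_forall.mp hω
    simp only [IsGoodDraw, not_and_or, not_le] at hi
    refine Set.mem_iUnion.mpr ⟨i, ?_⟩
    rcases hi with h | h | h
    exacts [.inl (.inl h), .inl (.inr h), .inr h.le]
  calc μ.real {ω | ∀ i, IsGoodDraw s2 t N (m1 i ω) (m2 i ω) (e i ω)}ᶜ
      ≤ ∑ i, μ.real ({ω | t < |m1 i ω| / √s2} ∪ {ω | t < |m2 i ω - s2| / s2} ∪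
          {ω | N * √s2 ≤ |e i ω|}) :=
        (measureReal_mono hsub).trans (measureReal_iUnion_fintype_le _)
    _ ≤ ∑ _i : ι, (2 * (c / t + r) + 1 / N ^ 2) := by
        gcongr with i
        refine (measureReal_union_le _ _).trans ?_
        linarith [measureReal_union_le (μ := μ) {ω | t < |m1 i ω| / √s2}
          {ω | t < |m2 i ω - s2| / s2}, htail1 i, htail2 i, hcheb i]
    _ = Fintype.card ι * (2 * (c / t + r) + 1 / N ^ 2) := by
        rw [Finset.sum_const, Finset.card_univ, nsmul_eq_mul]

end Probability

def goodEvent {Ω : ℕ → Type*} (s2 : ℕ → ℝ) (m1 m2 e : ∀ n, Fin n → Ω n → ℝ) (M n : ℕ) :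
    Set (Ω n) :=
  {ω | ∀ i, IsGoodDraw (s2 n) ((n : ℝ) ^ M)⁻¹ n (m1 n i ω) (m2 n i ω) (e n i ω)}

theorem abs_sub_standardize_le_of_mem_goodEvent {Ω : ℕ → Type*} {s2 : ℕ → ℝ}
    {m1 m2 e estar : ∀ n, Fin n → Ω n → ℝ} {M n : ℕ} (hs2 : 0 < s2 n)
    (hestar : ∀ i ω, estar n i ω =
      √(s2 n) * (√(m2 n i ω - m1 n i ω ^ 2))⁻¹ * (e n i ω - m1 n i ω))
    (hM : M ≠ 0) (hn : 4 ≤ n) {ω : Ω n} (hω : ω ∈ goodEvent s2 m1 m2 e M n) (i : Fin n) :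
    |e n i ω - estar n i ω| ≤ 6 * n * ((n : ℝ) ^ M)⁻¹ * √(s2 n) := by
  have hn1 : (1 : ℝ) ≤ n := by exact_mod_cast (by omega : 1 ≤ n)
  have hT : ((n : ℝ) ^ M)⁻¹ ≤ 1 / 4 := by
    rw [one_div]; exact inv_pow_le_inv_of_le (by norm_num) (by exact_mod_cast hn) hn1 hM
  rw [hestar]
  exact (hω i).abs_sub_standardize_le hs2 hT hn1

section Asymptotics

variable {Ω : ℕ → Type*} [∀ n, MeasurableSpace (Ω n)] {μ : ∀ n, Measure (Ω n)}
  [∀ n, IsFiniteMeasure (μ n)] {s2 : ℕ → ℝ} {m1 m2 e : ∀ n, Fin n → Ω n → ℝ}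

theorem tendsto_measureReal_goodEvent_compl {c r : ℕ → ℝ} (hs2 : ∀ n, 0 < s2 n)
    (he2 : ∀ n i, MemLp (e n i) 2 (μ n)) (hs2e : ∀ n (i : Fin n), s2 n = ∫ ω, e n i ω ^ 2 ∂μ n)
    {M : ℕ} (hc : Tendsto (fun n : ℕ => (n : ℝ) ^ (M + 1) * c n) atTop (𝓝 0))
    (hr : Tendsto (fun n : ℕ => (n : ℝ) * r n) atTop (𝓝 0))
    (htail1 : ∀ n (i : Fin n), ∀ t : ℝ, 0 < t →
      (μ n).real {ω | t < |m1 n i ω| / √(s2 n)} ≤ c n / t + r n)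
    (htail2 : ∀ n (i : Fin n), ∀ t : ℝ, 0 < t →
      (μ n).real {ω | t < |m2 n i ω - s2 n| / s2 n} ≤ c n / t + r n) :
    Tendsto (fun n => (μ n).real (goodEvent s2 m1 m2 e M n)ᶜ) atTop (𝓝 0) := by
  have hbound : Tendsto (fun n : ℕ => 2 * ((n : ℝ) ^ (M + 1) * c n + n * r n) + 1 / n)
      atTop (𝓝 0) := by
    simpa using ((hc.add hr).const_mul 2).add (tendsto_const_div_atTop_nhds_zero_nat 1)
  refine squeeze_zero' (Eventually.of_forall fun n => measureReal_nonneg) ?_ hbound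
  filter_upwards [eventually_ge_atTop 1] with n hn
  have hn0 : (0 : ℝ) < n := by exact_mod_cast hn
  have ht : (0 : ℝ) < ((n : ℝ) ^ M)⁻¹ := by positivity
  calc (μ n).real (goodEvent s2 m1 m2 e M n)ᶜ
      ≤ Fintype.card (Fin n) * (2 * (c n / ((n : ℝ) ^ M)⁻¹ + r n) + 1 / (n : ℝ) ^ 2) :=
        measureReal_compl_forall_isGoodDraw_le (hs2 n) hn0 (he2 n) (hs2e n)
          (fun i => htail1 n i _ ht) (fun i => htail2 n i _ ht)
    _ = 2 * ((n : ℝ) ^ (M + 1) * c n + n * r n) + 1 / n := by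
        rw [Fintype.card_fin]
        field_simp
        ring

theorem tendsto_measureReal_of_eventually_subset_compl {G B : ∀ n, Set (Ω n)}
    (hG : Tendsto (fun n => (μ n).real (G n)ᶜ) atTop (𝓝 0))
    (hB : ∀ᶠ n in atTop, B n ⊆ (G n)ᶜ) :
    Tendsto (fun n => (μ n).real (B n)) atTop (𝓝 0) :=
  squeeze_zero' (Eventually.of_forall fun n => measureReal_nonneg)
    (hB.mono fun _ h => measureReal_mono h) hG

theorem tendsto_measureReal_exists_lt_abs_condVar_div_sub_one (hs2 : ∀ n, 0 < s2 n)
    (hgood : Tendsto (fun n => (μ n).real (goodEvent s2 m1 m2 e 1 n)ᶜ) atTop (𝓝 0))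
    {δ : ℝ} (hδ : 0 < δ) :
    Tendsto (fun n => (μ n).real
      {ω | ∃ i : Fin n, δ < |(m2 n i ω - m1 n i ω ^ 2) / s2 n - 1|}) atTop (𝓝 0) := by
  refine tendsto_measureReal_of_eventually_subset_compl hgood ?_
  filter_upwards [eventually_ge_atTop 1,
    (tendsto_const_div_atTop_nhds_zero_nat 2).eventually_le_const hδ] with n hn hnδ ω ⟨i, hi⟩ hω
  have hn1 : (1 : ℝ) ≤ n := by exact_mod_cast hn
  have hT : ((n : ℝ) ^ 1)⁻¹ ≤ 1 := by simpa using inv_pow_le_inv_of_le one_pos hn1 hn1 one_ne_zero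
  refine hi.not_ge ((hω i).abs_condVar_div_sub_one_le (hs2 n) hT |>.trans ?_)
  rwa [pow_one, ← div_eq_mul_inv]

variable {estar : ∀ n, Fin n → Ω n → ℝ}

theorem tendsto_measureReal_lt_rpow_mul_sqrt_sum_sq_sub (hs2 : ∀ n, 0 < s2 n)
    (hgood : ∀ M, Tendsto (fun n => (μ n).real (goodEvent s2 m1 m2 e M n)ᶜ) atTop (𝓝 0))
    (hestar : ∀ n i ω, estar n i ω =
      √(s2 n) * (√(m2 n i ω - m1 n i ω ^ 2))⁻¹ * (e n i ω - m1 n i ω))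
    (k : ℝ) {δ : ℝ} (hδ : 0 < δ) :
    Tendsto (fun n : ℕ => (μ n).real {ω | δ < (n : ℝ) ^ k *
      √(∑ i, (e n i ω - estar n i ω) ^ 2) / √(s2 n)}) atTop (𝓝 0) := by
  set K := ⌈k⌉₊
  refine tendsto_measureReal_of_eventually_subset_compl (hgood (K + 3)) ?_
  filter_upwards [eventually_ge_atTop 4,
    (tendsto_const_div_atTop_nhds_zero_nat 6).eventually_le_const hδ] with n hn hnδ ω hωδ hω
  have hn1 : (1 : ℝ) ≤ n := by exact_mod_cast (by omega : 1 ≤ n)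
  have hnorm := sqrt_sum_sq_le_of_abs_le
    (abs_sub_standardize_le_of_mem_goodEvent (hs2 n) (hestar n) (by omega) hn hω)
  rw [Fintype.card_fin] at hnorm
  change δ < _ at hωδ
  refine not_lt.mpr ?_ hωδ
  calc (n : ℝ) ^ k * √(∑ i, (e n i ω - estar n i ω) ^ 2) / √(s2 n)
      ≤ (n : ℝ) ^ K * (n * (6 * n * ((n : ℝ) ^ (K + 3))⁻¹ * √(s2 n))) / √(s2 n) := by
        gcongr
        · exact rpow_le_pow_natCeil hn1 k
        · exact hnorm.trans (by gcongr; exact Real.sqrt_le_self_iff.mpr (.inr hn1))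
    _ = 6 / n := by
        have := (Real.sqrt_pos.mpr (hs2 n)).ne'
        have : (n : ℝ) ≠ 0 := by positivity
        field_simp
        ring
    _ ≤ δ := hnδ

theorem tendsto_measureReal_lt_rpow_mul_abs_dotProduct_mulVec_sub (hs2 : ∀ n, 0 < s2 n)
    (hgood : ∀ M, Tendsto (fun n => (μ n).real (goodEvent s2 m1 m2 e M n)ᶜ) atTop (𝓝 0))
    (hestar : ∀ n i ω, estar n i ω =
      √(s2 n) * (√(m2 n i ω - m1 n i ω ^ 2))⁻¹ * (e n i ω - m1 n i ω))
    (k : ℝ) {P : ∀ n, Ω n → Matrix (Fin n) (Fin n) ℝ} (hsym : ∀ n ω, (P n ω)ᵀ = P n ω)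
    (hid : ∀ n ω, P n ω * P n ω = P n ω) {δ : ℝ} (hδ : 0 < δ) :
    Tendsto (fun n : ℕ => (μ n).real {ω | δ < (n : ℝ) ^ k *
      |(fun i => e n i ω) ⬝ᵥ (P n ω *ᵥ fun i => e n i ω) -
        (fun i => estar n i ω) ⬝ᵥ (P n ω *ᵥ fun i => estar n i ω)| / s2 n}) atTop (𝓝 0) := by
  set K := ⌈k⌉₊
  refine tendsto_measureReal_of_eventually_subset_compl (hgood (K + 4)) ?_
  filter_upwards [eventually_ge_atTop 6,
    (tendsto_const_div_atTop_nhds_zero_nat 18).eventually_le_const hδ] with n hn hnδ ω hωδ hω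
  have hn1 : (1 : ℝ) ≤ n := by exact_mod_cast (by omega : 1 ≤ n)
  set T := ((n : ℝ) ^ (K + 4))⁻¹
  have hT : 6 * T ≤ 1 := by
    have : T ≤ 6⁻¹ := inv_pow_le_inv_of_le (by norm_num) (by exact_mod_cast hn) hn1 (by omega)
    linarith
  have hdiff := abs_sub_standardize_le_of_mem_goodEvent (hs2 n) (hestar n) (by omega)
    (by omega) hω
  have he : ∀ i, |e n i ω| ≤ n * √(s2 n) := fun i => (hω i).2.2
  have hestar_le : ∀ i, |estar n i ω| ≤ 2 * n * √(s2 n) := fun i => by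
    have h6 : 6 * n * T * √(s2 n) ≤ n * √(s2 n) :=
      calc 6 * n * T * √(s2 n) = 6 * T * (n * √(s2 n)) := by ring
        _ ≤ n * √(s2 n) := mul_le_of_le_one_left (by positivity) hT
    linarith [abs_sub_abs_le_abs_sub (estar n i ω) (e n i ω),
      abs_sub_comm (estar n i ω) (e n i ω), hdiff i, he i]
  have hquad := abs_dotProduct_mulVec_sub_le_card_mul (hsym n ω) (hid n ω) he hestar_le hdiff
  rw [Fintype.card_fin] at hquad
  change δ < _ at hωδ
  refine not_lt.mpr ?_ hωδ
  calc (n : ℝ) ^ k * |(fun i => e n i ω) ⬝ᵥ (P n ω *ᵥ fun i => e n i ω) -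
        (fun i => estar n i ω) ⬝ᵥ (P n ω *ᵥ fun i => estar n i ω)| / s2 n
      ≤ (n : ℝ) ^ K * (n * (6 * n * T * √(s2 n)) * (n * √(s2 n) + 2 * n * √(s2 n))) /
          s2 n :=
        div_le_div_of_nonneg_right (mul_le_mul (rpow_le_pow_natCeil hn1 k) hquad (abs_nonneg _)
          (by positivity)) (hs2 n).le
    _ = 18 / n := by
        have := (hs2 n).ne'
        have : (n : ℝ) ≠ 0 := by positivity
        have hnT : (n : ℝ) ^ (K + 4) * T = 1 := mul_inv_cancel₀ (by positivity)
        field_simp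
        rw [Real.sq_sqrt (hs2 n).le]
        linear_combination 18 * s2 n * hnT
    _ ≤ δ := hnδ

end Asymptotics

theorem stmt_13_general
    (Ω : ℕ → Type*) [∀ n, MeasureSpace (Ω n)]
    [∀ n, IsProbabilityMeasure (ℙ : Measure (Ω n))]
    -- the regressors xᵢ take values in ℝ^{q n}, the errors eᵢ in ℝ
    (e : ∀ n, Fin n → Ω n → ℝ)
    (he2 : ∀ n i, MemLp (e n i) 2 ℙ)
    -- s² = E[e²] ∈ (0,∞)
    (s2 : ℕ → ℝ) (hs2 : ∀ n (i : Fin n), s2 n = ∫ ω, (e n i ω) ^ 2)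
    (hs2pos : ∀ n, 0 < s2 n)
    -- the σ-algebras generated by the xᵢ, the conditional moments, and Var[eᵢ|xᵢ]
    (m1 : ∀ n, Fin n → Ω n → ℝ)
    (m2 : ∀ n, Fin n → Ω n → ℝ)
    (V : ∀ n, Fin n → Ω n → ℝ)
    (hV : ∀ n i ω, V n i ω = m2 n i ω - (m1 n i ω) ^ 2)
    -- the substitute errors eᵢ*
    (estar : ∀ n, Fin n → Ω n → ℝ)
    (hestar : ∀ n i ω, estar n i ω =
      Real.sqrt (s2 n) * (Real.sqrt (V n i ω))⁻¹ * (e n i ω - m1 n i ω))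
    -- the tail assumptions on the conditional moments
    (c r : ℕ → ℝ)
    (hcdecay : ∀ m : ℕ, Tendsto (fun n : ℕ => (n : ℝ) ^ m * c n) atTop (nhds 0))
    (hrdecay : Tendsto (fun n : ℕ => (n : ℝ) * r n) atTop (nhds 0))
    (htail1 : ∀ n (i : Fin n), ∀ t : ℝ, 0 < t →
      (ℙ {ω | t < |m1 n i ω| / Real.sqrt (s2 n)}).toReal ≤ c n / t + r n)
    (htail2 : ∀ n (i : Fin n), ∀ t : ℝ, 0 < t →
      (ℙ {ω | t < |m2 n i ω - s2 n| / s2 n}).toReal ≤ c n / t + r n) :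
    -- (i)  n^k ‖E − E*‖/s → 0 in probability
    (∀ k : ℝ, ∀ δ : ℝ, 0 < δ → Tendsto
        (fun n : ℕ => (ℙ {ω | δ < (n : ℝ) ^ k *
            Real.sqrt (∑ i : Fin n, (e n i ω - estar n i ω) ^ 2) /
              Real.sqrt (s2 n)}).toReal)
        atTop (nhds 0)) ∧
    -- (ii)  n^k |E'PₙE − (E*)'PₙE*|/s² → 0 in probability
    (∀ k : ℝ, ∀ P : ∀ n, Ω n → Matrix (Fin n) (Fin n) ℝ,
      (∀ n, Measurable fun ω (i j : Fin n) => P n ω i j) →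
      (∀ n ω, (P n ω)ᵀ = P n ω ∧ P n ω * P n ω = P n ω) →
      ∀ δ : ℝ, 0 < δ → Tendsto
        (fun n : ℕ => (ℙ {ω | δ < (n : ℝ) ^ k *
            |(fun i => e n i ω) ⬝ᵥ (P n ω *ᵥ fun i => e n i ω) -
              (fun i => estar n i ω) ⬝ᵥ (P n ω *ᵥ fun i => estar n i ω)| /
                s2 n}).toReal)
        atTop (nhds 0)) ∧
    -- (iii)  max_{1 ≤ i ≤ n} |Var[eᵢ|xᵢ]/s² − 1| → 0 in probability
    (∀ δ : ℝ, 0 < δ → Tendsto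
        (fun n : ℕ => (ℙ {ω | ∃ i : Fin n, δ < |V n i ω / s2 n - 1|}).toReal)
        atTop (nhds 0)) := by
  have hgood (M : ℕ) :
      Tendsto (fun n => (ℙ : Measure (Ω n)).real (goodEvent s2 m1 m2 e M n)ᶜ) atTop (𝓝 0) :=
    tendsto_measureReal_goodEvent_compl hs2pos he2 hs2 (hcdecay (M + 1)) hrdecay htail1 htail2
  have hestar' : ∀ n i ω, estar n i ω =
      √(s2 n) * (√(m2 n i ω - m1 n i ω ^ 2))⁻¹ * (e n i ω - m1 n i ω) := fun n i ω => by
    rw [hestar, hV]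
  refine ⟨fun k δ hδ => ?_, fun k P _ hP δ hδ => ?_, fun δ hδ => ?_⟩
  · exact tendsto_measureReal_lt_rpow_mul_sqrt_sum_sq_sub hs2pos hgood hestar' k hδ
  · exact tendsto_measureReal_lt_rpow_mul_abs_dotProduct_mulVec_sub hs2pos hgood hestar' k
      (fun n ω => (hP n ω).1) (fun n ω => (hP n ω).2) hδ
  · simp only [hV]
    exact tendsto_measureReal_exists_lt_abs_condVar_div_sub_one hs2pos (hgood 1) hδ

/-- **Lemma 1.** For each `n`, let `(x₁,e₁),…,(xₙ,eₙ)` be i.i.d. copies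
(on a common probability space `Ω n`, distributions possibly depending on `n`) of a pair
`(x,e)` with `e` real-valued, `s² = E[e²] ∈ (0,∞)` and `Var[e|x] > 0` a.s.  With
`eᵢ* = s·(Var[eᵢ|xᵢ])^{−1/2}(eᵢ − E[eᵢ|xᵢ])`, `E = (e₁,…,eₙ)'`, `E* = (e₁*,…,eₙ*)'`,
assume there are nonnegative sequences `cₙ`, `rₙ` with `n^m·cₙ → 0` for every `m` and
`n·rₙ → 0`, such that for all `n` and `t > 0`:
`P(|E[e₁|x₁]|/s > t) ≤ cₙ/t + rₙ` and `P(|E[e₁²|x₁] − s²|/s² > t) ≤ cₙ/t + rₙ`.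
Then, as `n → ∞`: (i) `n^k‖E − E*‖/s → 0` in probability for every `k ∈ ℝ`;
(ii) `n^k|E'PₙE − (E*)'PₙE*|/s² → 0` in probability for every `k ∈ ℝ` and every
sequence `Pₙ` of (possibly random) symmetric idempotent `n×n` matrices;
(iii) `max_{1≤i≤n} |Var[eᵢ|xᵢ]/s² − 1| → 0` in probability. -/
theorem stmt_13
    (Ω : ℕ → Type*) [∀ n, MeasureSpace (Ω n)]
    [∀ n, IsProbabilityMeasure (ℙ : Measure (Ω n))]
    -- the regressors xᵢ take values in ℝ^{q n}, the errors eᵢ in ℝ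
    (q : ℕ → ℕ)
    (x : ∀ n, Fin n → Ω n → (Fin (q n) → ℝ)) (e : ∀ n, Fin n → Ω n → ℝ)
    (hxm : ∀ n i, Measurable (x n i)) (hem : ∀ n i, Measurable (e n i))
    -- the pairs (xᵢ, eᵢ), 1 ≤ i ≤ n, are independent and identically distributed
    (hindep : ∀ n, iIndepFun
        (fun (i : Fin n) ω => (x n i ω, e n i ω)) ℙ)
    (hident : ∀ n (i j : Fin n),
        IdentDistrib (fun ω => (x n i ω, e n i ω)) (fun ω => (x n j ω, e n j ω)) ℙ ℙ)
    (he2 : ∀ n i, MemLp (e n i) 2 ℙ)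
    -- s² = E[e²] ∈ (0,∞)
    (s2 : ℕ → ℝ) (hs2 : ∀ n (i : Fin n), s2 n = ∫ ω, (e n i ω) ^ 2)
    (hs2pos : ∀ n, 0 < s2 n)
    -- the σ-algebras generated by the xᵢ, the conditional moments, and Var[eᵢ|xᵢ]
    (mx : ∀ n, Fin n → MeasurableSpace (Ω n))
    (hmx : ∀ n i, mx n i = MeasurableSpace.comap (x n i) inferInstance)
    (m1 : ∀ n, Fin n → Ω n → ℝ) (hm1 : ∀ n i, m1 n i = ℙ[e n i|mx n i])
    (m2 : ∀ n, Fin n → Ω n → ℝ)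
    (hm2 : ∀ n i, m2 n i = ℙ[fun ω => (e n i ω) ^ 2|mx n i])
    (V : ∀ n, Fin n → Ω n → ℝ)
    (hV : ∀ n i ω, V n i ω = m2 n i ω - (m1 n i ω) ^ 2)
    (hVpos : ∀ n i, ∀ᵐ ω ∂(ℙ : Measure (Ω n)), 0 < V n i ω)
    -- the substitute errors eᵢ*
    (estar : ∀ n, Fin n → Ω n → ℝ)
    (hestar : ∀ n i ω, estar n i ω =
      Real.sqrt (s2 n) * (Real.sqrt (V n i ω))⁻¹ * (e n i ω - m1 n i ω))
    -- the tail assumptions on the conditional moments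
    (c r : ℕ → ℝ) (hc0 : ∀ n, 0 ≤ c n) (hr0 : ∀ n, 0 ≤ r n)
    (hcdecay : ∀ m : ℕ, Tendsto (fun n : ℕ => (n : ℝ) ^ m * c n) atTop (nhds 0))
    (hrdecay : Tendsto (fun n : ℕ => (n : ℝ) * r n) atTop (nhds 0))
    (htail1 : ∀ n (i : Fin n), ∀ t : ℝ, 0 < t →
      (ℙ {ω | t < |m1 n i ω| / Real.sqrt (s2 n)}).toReal ≤ c n / t + r n)
    (htail2 : ∀ n (i : Fin n), ∀ t : ℝ, 0 < t →
      (ℙ {ω | t < |m2 n i ω - s2 n| / s2 n}).toReal ≤ c n / t + r n) :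
    -- (i)  n^k ‖E − E*‖/s → 0 in probability
    (∀ k : ℝ, ∀ δ : ℝ, 0 < δ → Tendsto
        (fun n : ℕ => (ℙ {ω | δ < (n : ℝ) ^ k *
            Real.sqrt (∑ i : Fin n, (e n i ω - estar n i ω) ^ 2) /
              Real.sqrt (s2 n)}).toReal)
        atTop (nhds 0)) ∧
    -- (ii)  n^k |E'PₙE − (E*)'PₙE*|/s² → 0 in probability
    (∀ k : ℝ, ∀ P : ∀ n, Ω n → Matrix (Fin n) (Fin n) ℝ,
      (∀ n, Measurable fun ω (i j : Fin n) => P n ω i j) →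
      (∀ n ω, (P n ω)ᵀ = P n ω ∧ P n ω * P n ω = P n ω) →
      ∀ δ : ℝ, 0 < δ → Tendsto
        (fun n : ℕ => (ℙ {ω | δ < (n : ℝ) ^ k *
            |(fun i => e n i ω) ⬝ᵥ (P n ω *ᵥ fun i => e n i ω) -
              (fun i => estar n i ω) ⬝ᵥ (P n ω *ᵥ fun i => estar n i ω)| /
                s2 n}).toReal)
        atTop (nhds 0)) ∧
    -- (iii)  max_{1 ≤ i ≤ n} |Var[eᵢ|xᵢ]/s² − 1| → 0 in probability
    (∀ δ : ℝ, 0 < δ → Tendsto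
        (fun n : ℕ => (ℙ {ω | ∃ i : Fin n, δ < |V n i ω / s2 n - 1|}).toReal)
        atTop (nhds 0)) :=
  stmt_13_general Ω e he2 s2 hs2 hs2pos m1 m2 V hV estar hestar c r hcdecay hrdecay htail1 htail2
end

section
/- Let X be an n×p real matrix and U = [ι, X] the n×(p+1) matrix obtained by prepending the column ι = (1,…,1)'. If U'U is invertible, then X'(I_n − P_ι)X is invertible and the last p rows of the (p+1)×n matrix (U'U)⁻¹U' equal (X'(I_n − P_ι)X)⁻¹X'(I_n − P_ι); consequently, if Y = ια + Xβ + E for α ∈ ℝ, β ∈ ℝ^p, E ∈ ℝⁿ, then the OLS slope coefficient satisfies β̂ = β + (V'V)⁻¹V'E with V = (I_n − P_ι)X. -/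
open Matrix

/-- The matrix `[ι, X]` obtained from `X` by prepending the all-ones column `ι`. -/
def withIota {n p : ℕ} (X : Matrix (Fin n) (Fin p) ℝ) :
    Matrix (Fin n) (Fin (p + 1)) ℝ :=
  Matrix.of fun i j => Fin.cons (α := fun _ => ℝ) 1 (X i) j

/-- The OLS slope vector `β̂`: the last `p` entries of `([ι,X]'[ι,X])⁻¹[ι,X]'Y`. -/
noncomputable def olsSlope {n p : ℕ} (X : Matrix (Fin n) (Fin p) ℝ) (Y : Fin n → ℝ) :
    Fin p → ℝ :=
  fun j => ((((withIota X)ᵀ * withIota X)⁻¹ * (withIota X)ᵀ) *ᵥ Y) j.succ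

/-- The orthogonal projection matrix `P_ι = ιι'/n` onto the span of `ι = (1,…,1)'`. -/
noncomputable def iotaProj (n : ℕ) : Matrix (Fin n) (Fin n) ℝ :=
  Matrix.of fun _ _ => (n : ℝ)⁻¹

/-!
Frisch–Waugh–Lovell. Write `U = [ι, X]`, `M = I − P_ι`, and let `L` select the last `p`
coordinates. Since `M ι = 0` we have `M U = M X L`, and `M X = X − ι x̄'` lies in the column space
of `U` with coordinates `G` satisfying `L G = I`. The hat matrix `U (U'U)⁻¹ U'` fixes `M X`, so
`(X'MX) · L (U'U)⁻¹ U' = X'M U (U'U)⁻¹ U' = X'M`, and the same two facts give the left inverse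
`L (U'U)⁻¹ L'` of `X'MX`. For the regression, `M` kills `ια` and `V'V = X'MX` as `M` is a
symmetric idempotent.
-/

section FrischWaughLovell

variable {R m k p : Type*} [CommRing R] [Fintype m] [Fintype k] [DecidableEq k] [Fintype p]

noncomputable def olsCoef (U : Matrix m k R) : Matrix k m R :=
  (Uᵀ * U)⁻¹ * Uᵀ

variable {U : Matrix m k R} {X : Matrix m p R} {M : Matrix m m R} {L : Matrix p k R}
  {G : Matrix k p R}

theorem transpose_mul_mul_mul_mul_olsCoef (hU : IsUnit (Uᵀ * U).det) (hM : Mᵀ = M)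
    (hMU : M * U = M * X * L) (hMX : M * X = U * G) :
    Xᵀ * M * X * (L * olsCoef U) = Xᵀ * M := by
  have hXM : Xᵀ * M = Gᵀ * Uᵀ := by
    rw [← hM, ← transpose_mul, hMX, transpose_mul]
  calc Xᵀ * M * X * (L * olsCoef U)
      = Xᵀ * (M * U) * ((Uᵀ * U)⁻¹ * Uᵀ) := by simp only [olsCoef, Matrix.mul_assoc, hMU]
    _ = Gᵀ * ((Uᵀ * U) * (Uᵀ * U)⁻¹) * Uᵀ := by simp only [← Matrix.mul_assoc, hXM]
    _ = Xᵀ * M := by rw [mul_nonsing_inv _ hU, Matrix.mul_one, hXM]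

theorem isUnit_det_transpose_mul_mul [DecidableEq p] (hU : IsUnit (Uᵀ * U).det)
    (hM : Mᵀ = M) (hMU : M * U = M * X * L) (hMX : M * X = U * G) (hLG : L * G = 1) :
    IsUnit (Xᵀ * M * X).det := by
  have hUMX : Lᵀ * (Xᵀ * M * X) = Uᵀ * U * G := by
    calc Lᵀ * (Xᵀ * M * X) = (M * X * L)ᵀ * X := by
          simp only [transpose_mul, hM, Matrix.mul_assoc]
      _ = Uᵀ * U * G := by rw [← hMU, transpose_mul, hM, Matrix.mul_assoc, hMX, Matrix.mul_assoc]
  refine isUnit_det_of_left_inverse (B := L * (Uᵀ * U)⁻¹ * Lᵀ) ?_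
  rw [Matrix.mul_assoc, hUMX, Matrix.mul_assoc, ← Matrix.mul_assoc _ _ G, nonsing_inv_mul _ hU,
    Matrix.one_mul, hLG]

/-- Frisch–Waugh–Lovell: `M` annihilates the regressors of `U` other than `X` (`L` selects the
`X`-coordinates), and `M X` lies in the column space of `U` with `X`-coordinates `I`. -/
theorem mul_olsCoef_eq_inv_mul [DecidableEq p] (hU : IsUnit (Uᵀ * U).det)
    (hM : Mᵀ = M) (hMU : M * U = M * X * L) (hMX : M * X = U * G) (hLG : L * G = 1) :
    IsUnit (Xᵀ * M * X).det ∧ L * olsCoef U = (Xᵀ * M * X)⁻¹ * (Xᵀ * M) := by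
  have hS := isUnit_det_transpose_mul_mul hU hM hMU hMX hLG
  refine ⟨hS, ?_⟩
  calc L * olsCoef U
      = (Xᵀ * M * X)⁻¹ * (Xᵀ * M * X * (L * olsCoef U)) :=
        (nonsing_inv_mul_cancel_left _ _ hS).symm
    _ = (Xᵀ * M * X)⁻¹ * (Xᵀ * M) := by rw [transpose_mul_mul_mul_mul_olsCoef hU hM hMU hMX]

theorem inv_mul_transpose_mul_mulVec [DecidableEq p] (hS : IsUnit (Xᵀ * M * X).det)
    {c : m → R} (hc : M *ᵥ c = 0) (β : p → R) (E : m → R) :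
    ((Xᵀ * M * X)⁻¹ * (Xᵀ * M)) *ᵥ (c + X *ᵥ β + E) = β + ((Xᵀ * M * X)⁻¹ * (Xᵀ * M)) *ᵥ E := by
  rw [mulVec_add, mulVec_add, ← mulVec_mulVec, ← mulVec_mulVec, hc, mulVec_zero, mulVec_zero,
    zero_add, mulVec_mulVec, Matrix.mul_assoc, nonsing_inv_mul _ hS,
    one_mulVec]

end FrischWaughLovell

def succRows (R : Type*) [Zero R] [One R] (p : ℕ) : Matrix (Fin p) (Fin (p + 1)) R :=
  (1 : Matrix (Fin (p + 1)) (Fin (p + 1)) R).submatrix Fin.succ id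

theorem succRows_mul {R m : Type*} [Semiring R] {p : ℕ} (B : Matrix (Fin (p + 1)) m R) :
    succRows R p * B = B.submatrix Fin.succ id := by
  ext j i
  simp [succRows, mul_apply, Matrix.one_apply]

/-- The coordinates of `(I − P_ι) X` with respect to the columns of `[ι, X]`. -/
noncomputable def centeringCoef {n p : ℕ} (X : Matrix (Fin n) (Fin p) ℝ) :
    Matrix (Fin (p + 1)) (Fin p) ℝ :=
  Matrix.of fun k j =>
    (Fin.cons (-((n : ℝ)⁻¹ * ∑ i, X i j)) fun j' => (1 : Matrix (Fin p) (Fin p) ℝ) j' j :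
      Fin (p + 1) → ℝ) k

section Centering

variable {n p : ℕ}

theorem transpose_one_sub_iotaProj : (1 - iotaProj n)ᵀ = 1 - iotaProj n := by
  ext i j
  simp [iotaProj, Matrix.one_apply, eq_comm]

theorem sum_iotaProj (hn : n ≠ 0) (i : Fin n) : ∑ j, iotaProj n i j = 1 := by
  simp [iotaProj, hn]

theorem one_sub_iotaProj_mulVec_const (hn : n ≠ 0) (a : ℝ) :
    (1 - iotaProj n) *ᵥ (fun _ => a) = 0 := by
  ext i
  simp [mulVec, dotProduct, sub_mul, Finset.sum_sub_distrib, Matrix.one_apply, ← Finset.sum_mul,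
    sum_iotaProj hn]

theorem one_sub_iotaProj_mul_self (hn : n ≠ 0) :
    (1 - iotaProj n) * (1 - iotaProj n) = 1 - iotaProj n := by
  have hP : iotaProj n * iotaProj n = iotaProj n := by
    ext i j
    simp [iotaProj, mul_apply, hn]
  rw [sub_mul, mul_sub, mul_sub, hP]
  simp

theorem one_sub_iotaProj_mul_withIota (hn : n ≠ 0) (X : Matrix (Fin n) (Fin p) ℝ) :
    (1 - iotaProj n) * withIota X = (1 - iotaProj n) * X * succRows ℝ p := by
  ext i k
  refine Fin.cases ?_ (fun j => ?_) k
  · simp [mul_apply, withIota, succRows, Matrix.one_apply, sum_iotaProj hn]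
  · simp [mul_apply, withIota, succRows, Matrix.one_apply]

theorem one_sub_iotaProj_mul_eq_withIota_mul (X : Matrix (Fin n) (Fin p) ℝ) :
    (1 - iotaProj n) * X = withIota X * centeringCoef X := by
  ext i j
  simp [mul_apply, withIota, centeringCoef, Fin.sum_univ_succ, iotaProj, sub_mul,
    Finset.sum_sub_distrib, Matrix.one_apply, Finset.mul_sum]
  ring

theorem succRows_mul_centeringCoef (X : Matrix (Fin n) (Fin p) ℝ) :
    succRows ℝ p * centeringCoef X = 1 := by
  ext
  simp [succRows_mul, centeringCoef]

theorem ne_zero_of_isUnit_det_gram_withIota {X : Matrix (Fin n) (Fin p) ℝ}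
    (hU : IsUnit ((withIota X)ᵀ * withIota X).det) : n ≠ 0 := by
  rintro rfl
  simp at hU

theorem olsSlope_eq_mulVec (X : Matrix (Fin n) (Fin p) ℝ) (Y : Fin n → ℝ) :
    olsSlope X Y = (succRows ℝ p * olsCoef (withIota X)) *ᵥ Y := by
  rw [succRows_mul]
  rfl

end Centering

/-- Let `U = [ι, X]`.  If `U'U` is invertible, then
`X'(I_n − P_ι)X` is invertible and the last `p` rows of `(U'U)⁻¹U'` equal
`(X'(I_n − P_ι)X)⁻¹X'(I_n − P_ι)`; consequently, if `Y = ια + Xβ + E`, then the OLS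
slope coefficient satisfies `β̂ = β + (V'V)⁻¹V'E` with `V = (I_n − P_ι)X`. -/
theorem stmt_16 {n p : ℕ} (X : Matrix (Fin n) (Fin p) ℝ)
    (hU : IsUnit ((withIota X)ᵀ * withIota X).det)
    (V : Matrix (Fin n) (Fin p) ℝ) (hV : V = (1 - iotaProj n) * X) :
    IsUnit (Xᵀ * (1 - iotaProj n) * X).det ∧
    (∀ (j : Fin p) (i : Fin n),
      (((withIota X)ᵀ * withIota X)⁻¹ * (withIota X)ᵀ) j.succ i =
        (((Xᵀ * (1 - iotaProj n) * X)⁻¹ * (Xᵀ * (1 - iotaProj n)) : Matrix (Fin p) (Fin n) ℝ)) j i) ∧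
    (∀ (α : ℝ) (β : Fin p → ℝ) (E : Fin n → ℝ) (Y : Fin n → ℝ),
      Y = (fun _ => α) + X *ᵥ β + E →
      olsSlope X Y = β + ((Vᵀ * V)⁻¹ * Vᵀ) *ᵥ E) := by
  have hn := ne_zero_of_isUnit_det_gram_withIota hU
  obtain ⟨hS, hrows⟩ := mul_olsCoef_eq_inv_mul hU transpose_one_sub_iotaProj
    (one_sub_iotaProj_mul_withIota hn X) (one_sub_iotaProj_mul_eq_withIota_mul X)
    (succRows_mul_centeringCoef X)
  refine ⟨hS, fun j i => ?_, fun α β E Y hY => ?_⟩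
  · rw [← hrows, succRows_mul]
    rfl
  · have hVt : Vᵀ = Xᵀ * (1 - iotaProj n) := by
      rw [hV, transpose_mul, transpose_one_sub_iotaProj]
    have hVV : Vᵀ * V = Xᵀ * (1 - iotaProj n) * X := by
      rw [hVt, hV, ← Matrix.mul_assoc, Matrix.mul_assoc Xᵀ, one_sub_iotaProj_mul_self hn]
    rw [olsSlope_eq_mulVec, hrows, hVV, hVt, hY,
      inv_mul_transpose_mul_mulVec hS (one_sub_iotaProj_mulVec_const hn α)]
end
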